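/- Let R > 0 and let (Ψ_n)_{n ∈ ℕ} be an orthonormal family in L²((-R,R)) such that each Ψ_n is the class of x ↦ p_n(x)·e^x for a real polynomial p_n of degree exactly n. Then for every N ≥ 1, the N×N real matrix M with entries M_{m n} = ∫_{-R}^{R} Ψ_n'(x) Ψ_m(x) dx, 0 ≤ m, n ≤ N−1, has determinant 1 and in particular is invertible. -/

import Mathlib

/-!
Since `(p e^x)' = (p' + p) e^x`, the entry `M m n` equals `⟨p_n' e^x, Ψ_m⟩ + δ_{nm}`. For `n ≤ m`
the polynomial `p_n'` has degree `< m`, so it lies in the span of `p_0, …, p_{m-1}` and `p_n' e^x`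
is orthogonal to `Ψ_m`. Hence `M` is upper triangular with unit diagonal.
-/

open MeasureTheory Polynomial

namespace Polynomial.Sequence

lemma mem_span_image_Iio_of_degree_lt {K : Type*} [Field K] (S : Sequence K) {m : ℕ}
    {q : K[X]} (hq : q.degree < m) :
    q ∈ Submodule.span K (S '' Set.Iio m) := by
  rw [S.span_degreeLT fun i _ => (leadingCoeff_ne_zero.mpr (S.ne_zero i)).isUnit]
  exact mem_degreeLT.mpr hq

lemma integral_eval_mul_eq_zero_of_degree_lt {μ : Measure ℝ} (S : Sequence ℝ) {w : ℝ → ℝ}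
    (hint : ∀ q : ℝ[X], Integrable (fun x => q.eval x * w x) μ) {m : ℕ}
    (horth : ∀ k < m, ∫ x, (S k).eval x * w x ∂μ = 0) {q : ℝ[X]} (hq : q.degree < m) :
    ∫ x, q.eval x * w x ∂μ = 0 := by
  have hmem := S.mem_span_image_Iio_of_degree_lt hq
  clear hq
  induction hmem using Submodule.span_induction with
  | mem q hq =>
    obtain ⟨k, hk, rfl⟩ := hq
    exact horth k hk
  | zero => simp
  | add q r _ _ hq hr =>
    simp only [eval_add, add_mul]
    rw [integral_add (hint q) (hint r), hq, hr, add_zero]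
  | smul c q _ hq =>
    simp only [eval_smul, smul_eq_mul, mul_assoc]
    rw [integral_const_mul, hq, mul_zero]

end Polynomial.Sequence

lemma MeasureTheory.L2.integral_mul_eq_inner {α : Type*} [MeasurableSpace α] {μ : Measure α}
    {f g : Lp ℝ 2 μ} {F G : α → ℝ} (hf : f =ᵐ[μ] F) (hg : g =ᵐ[μ] G) :
    ∫ x, F x * G x ∂μ = inner ℝ f g := by
  rw [L2.inner_def]
  refine integral_congr_ae ?_
  filter_upwards [hf, hg] with x hfx hgx
  simp [hfx, hgx, mul_comm]

lemma Polynomial.deriv_eval_mul_exp (q : ℝ[X]) (x : ℝ) :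
    deriv (fun y => q.eval y * Real.exp y) x = (derivative q).eval x * Real.exp x
      + q.eval x * Real.exp x :=
  ((q.hasDerivAt x).mul (Real.hasDerivAt_exp x)).deriv

lemma Polynomial.integrableOn_Ioo_eval_mul (q : ℝ[X]) {g : ℝ → ℝ} (hg : Continuous g)
    (a b : ℝ) :
    IntegrableOn (fun x => q.eval x * g x) (Set.Ioo a b) :=
  (Continuous.integrableOn_Icc (by fun_prop)).mono_set Set.Ioo_subset_Icc_self

lemma Polynomial.integral_deriv_eval_mul_exp_mul (q r : ℝ[X]) (a b : ℝ) :
    ∫ x in Set.Ioo a b, deriv (fun y => q.eval y * Real.exp y) x * (r.eval x * Real.exp x)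
      = (∫ x in Set.Ioo a b, (derivative q).eval x * (Real.exp x * (r.eval x * Real.exp x)))
        + ∫ x in Set.Ioo a b, q.eval x * (Real.exp x * (r.eval x * Real.exp x)) := by
  have hg : Continuous fun x => Real.exp x * (r.eval x * Real.exp x) := by fun_prop
  rw [← integral_add (integrableOn_Ioo_eval_mul _ hg a b) (integrableOn_Ioo_eval_mul _ hg a b)]
  congr 1 with x
  rw [deriv_eval_mul_exp]
  ring

theorem polyExp_deriv_matrix_invertible_general (R : ℝ)
    (p : ℕ → Polynomial ℝ) (hdeg : ∀ n : ℕ, (p n).degree = n)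
    (Ψ : ℕ → Lp ℝ 2 (volume.restrict (Set.Ioo (-R) R)))
    (horth : Orthonormal ℝ Ψ)
    (hΨ : ∀ n : ℕ, ⇑(Ψ n) =ᵐ[volume.restrict (Set.Ioo (-R) R)]
      fun x => (p n).eval x * Real.exp x)
    (N : ℕ)
    (M : Matrix (Fin N) (Fin N) ℝ)
    (hM : ∀ m n : Fin N,
      M m n = ∫ x in Set.Ioo (-R) R,
        deriv (fun y : ℝ => (p (n : ℕ)).eval y * Real.exp y) x
          * ((p (m : ℕ)).eval x * Real.exp x)) :
    M.det = 1 ∧ IsUnit M := by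
  let S : Sequence ℝ := ⟨p, hdeg⟩
  have hinner (k m : ℕ) :
      ∫ x in Set.Ioo (-R) R, (p k).eval x * (Real.exp x * ((p m).eval x * Real.exp x))
        = if k = m then 1 else 0 := by
    rw [← orthonormal_iff_ite.mp horth, ← L2.integral_mul_eq_inner (hΨ k) (hΨ m)]
    simp only [mul_assoc]
  have hvanish (m : ℕ) {q : ℝ[X]} (hq : q.degree < m) :
      ∫ x in Set.Ioo (-R) R, q.eval x * (Real.exp x * ((p m).eval x * Real.exp x)) = 0 :=
    S.integral_eval_mul_eq_zero_of_degree_lt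
      (fun q => integrableOn_Ioo_eval_mul q (by fun_prop) _ _)
      (fun k hk => (hinner k m).trans (if_neg hk.ne)) hq
  have hentry {m n : Fin N} (hnm : n ≤ m) : M m n = if (n : ℕ) = m then 1 else 0 := by
    have hder : (derivative (p n)).degree < (m : ℕ) :=
      (degree_derivative_lt (S.ne_zero n)).trans_le (by simpa [S, hdeg] using hnm)
    rw [hM, integral_deriv_eval_mul_exp_mul, hvanish m hder, hinner, zero_add]
  have hupper : M.IsUpperTriangular := fun m n hnm =>
    (hentry hnm.le).trans (if_neg (Fin.val_ne_iff.mpr hnm.ne))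
  have hdet : M.det = 1 := by
    rw [Matrix.det_of_isUpperTriangular hupper]
    exact Finset.prod_eq_one fun n _ => by simpa using hentry le_rfl
  exact ⟨hdet, (Matrix.isUnit_iff_isUnit_det M).mpr (hdet ▸ isUnit_one)⟩

/-- Let `R > 0` and `(Ψ_n)` be an orthonormal family in `L²((-R,R))` with `Ψ_n`
the class of `x ↦ p_n(x)·e^x`, `deg p_n = n`.  For every `N ≥ 1`, the `N×N` matrix
`M` with entries `M_{m n} = ∫_{-R}^R Ψ_n'(x) Ψ_m(x) dx`, `0 ≤ m, n ≤ N−1`, has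
determinant `1`; in particular it is invertible. -/
theorem polyExp_deriv_matrix_invertible (R : ℝ) (hR : 0 < R)
    (p : ℕ → Polynomial ℝ) (hdeg : ∀ n : ℕ, (p n).degree = n)
    (Ψ : ℕ → Lp ℝ 2 (volume.restrict (Set.Ioo (-R) R)))
    (horth : Orthonormal ℝ Ψ)
    (hΨ : ∀ n : ℕ, ⇑(Ψ n) =ᵐ[volume.restrict (Set.Ioo (-R) R)]
      fun x => (p n).eval x * Real.exp x)
    (N : ℕ) (hN : 1 ≤ N)
    (M : Matrix (Fin N) (Fin N) ℝ)
    (hM : ∀ m n : Fin N,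
      M m n = ∫ x in Set.Ioo (-R) R,
        deriv (fun y : ℝ => (p (n : ℕ)).eval y * Real.exp y) x
          * ((p (m : ℕ)).eval x * Real.exp x)) :
    M.det = 1 ∧ IsUnit M :=
  polyExp_deriv_matrix_invertible_general R p hdeg Ψ horth hΨ N M hM
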